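/- arXiv:1811.02725 — 8 statements merged into one kernel-verified Lean document; each statement's English description precedes it below -/
import Mathlib

section
/- Let F be a field, V ⊆ F^m a subspace, and t a positive integer. Then d_V(t) + D_V(t) ≥ 2·dim V. -/
/-- A matrix is `t`-row-sparse if every row has at most `t` nonzero entries. -/
def RowSparse {F : Type*} [Field F] {m k : ℕ} (t : ℕ) (Q : Matrix (Fin m) (Fin k) F) : Prop :=
  ∀ i, {j | Q i j ≠ 0}.ncard ≤ t

/-- A subspace of `F^m` is `t`-sparse if it is the column space of some `t`-row-sparse
matrix with `m` rows. -/
def IsSparseSubspace {F : Type*} [Field F] {m : ℕ} (t : ℕ)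
    (U : Submodule F (Fin m → F)) : Prop :=
  ∃ (k : ℕ) (Q : Matrix (Fin m) (Fin k) F),
    RowSparse t Q ∧ U = LinearMap.range Q.mulVecLin

/-- The inner dimension `d_V(t)`: the maximum of `dim (V ⊓ U)` over `t`-sparse subspaces
`U` with `dim U ≤ dim V`. -/
noncomputable def innerDim {F : Type*} [Field F] {m : ℕ} (t : ℕ)
    (V : Submodule F (Fin m → F)) : ℕ :=
  sSup {d | ∃ U : Submodule F (Fin m → F), IsSparseSubspace t U ∧
    Module.finrank F U ≤ Module.finrank F V ∧ d = Module.finrank F ↥(V ⊓ U)}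

/-- The outer dimension `D_V(t)`: the minimum dimension of a `t`-sparse subspace
containing `V`. -/
noncomputable def outerDim {F : Type*} [Field F] {m : ℕ} (t : ℕ)
    (V : Submodule F (Fin m → F)) : ℕ :=
  sInf {d | ∃ U : Submodule F (Fin m → F),
    IsSparseSubspace t U ∧ V ≤ U ∧ d = Module.finrank F U}

/-!
Let `U` be a `t`-sparse subspace of minimal dimension `D` containing `V`, the column space of a
`t`-row-sparse matrix `Q`. Choosing `dim V` linearly independent columns of `Q` gives a
`t`-sparse subspace `W ⊆ U` with `dim W = dim V`, so
`d_V(t) ≥ dim (V ⊓ W) = dim V + dim W - dim (V ⊔ W) ≥ 2 dim V - D`.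
-/

open Module Submodule

section

variable {F : Type*} [Field F] {m t : ℕ}

theorem RowSparse.submatrix_col {k k' : ℕ} {Q : Matrix (Fin m) (Fin k) F} (hQ : RowSparse t Q)
    {f : Fin k' → Fin k} (hf : Function.Injective f) : RowSparse t (Q.submatrix id f) :=
  fun i ↦ (Set.ncard_le_ncard_of_injOn f (fun _ hj ↦ hj) hf.injOn).trans (hQ i)

theorem rowSparse_one (ht : 0 < t) : RowSparse t (1 : Matrix (Fin m) (Fin m) F) := by
  intro i
  have hrow : {j | (1 : Matrix (Fin m) (Fin m) F) i j ≠ 0} = {i} := by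
    ext j
    simp [Matrix.one_apply, eq_comm]
  rwa [hrow, Set.ncard_singleton]

theorem isSparseSubspace_top (ht : 0 < t) :
    IsSparseSubspace t (⊤ : Submodule F (Fin m → F)) :=
  ⟨m, 1, rowSparse_one ht, by rw [Matrix.mulVecLin_one, LinearMap.range_id]⟩

theorem IsSparseSubspace.exists_le_finrank_eq {U : Submodule F (Fin m → F)}
    (hU : IsSparseSubspace t U) {n : ℕ} (hn : n ≤ finrank F U) :
    ∃ W ≤ U, IsSparseSubspace t W ∧ finrank F W = n := by
  obtain ⟨k, Q, hQ, rfl⟩ := hU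
  obtain ⟨κ, a, ha, hspan, hli⟩ := exists_linearIndependent'.{0} F Q.col
  have : Finite κ := Finite.of_injective a ha
  have : Fintype κ := Fintype.ofFinite κ
  have hcard : finrank F (LinearMap.range Q.mulVecLin) = Fintype.card κ := by
    rw [Matrix.range_mulVecLin, ← hspan, finrank_span_eq_card hli]
  obtain ⟨g⟩ := Function.Embedding.nonempty_of_card_le (α := Fin n) (β := κ)
    (by rwa [Fintype.card_fin, ← hcard])
  have hf : Function.Injective (a ∘ g) := ha.comp g.injective
  refine ⟨LinearMap.range (Q.submatrix id (a ∘ g)).mulVecLin, ?_,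
    ⟨n, _, hQ.submatrix_col hf, rfl⟩, ?_⟩
  · rw [Matrix.range_mulVecLin, Matrix.range_mulVecLin]
    exact span_mono (Set.range_comp_subset_range (a ∘ g) Q.col)
  · rw [Matrix.range_mulVecLin]
    exact (finrank_span_eq_card (hli.comp g g.injective)).trans (Fintype.card_fin n)

theorem exists_isSparseSubspace_le_finrank_eq_outerDim (ht : 0 < t)
    (V : Submodule F (Fin m → F)) :
    ∃ U, IsSparseSubspace t U ∧ V ≤ U ∧ finrank F U = outerDim t V := by
  obtain ⟨U, hU, hVU, hD⟩ := Nat.sInf_mem (s := {d | ∃ U : Submodule F (Fin m → F),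
    IsSparseSubspace t U ∧ V ≤ U ∧ d = finrank F U}) ⟨_, ⊤, isSparseSubspace_top ht, le_top, rfl⟩
  exact ⟨U, hU, hVU, hD.symm⟩

theorem finrank_inf_le_innerDim {V U : Submodule F (Fin m → F)}
    (hU : IsSparseSubspace t U) (hUV : finrank F U ≤ finrank F V) :
    finrank F ↥(V ⊓ U) ≤ innerDim t V := by
  refine le_csSup ⟨finrank F V, ?_⟩ ⟨U, hU, hUV, rfl⟩
  rintro _ ⟨U', -, -, rfl⟩
  exact finrank_mono inf_le_left

end

open Matrix in
/-- Paturi–Pudlák: `d_V(t) + D_V(t) ≥ 2 dim V`. -/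
theorem innerDim_add_outerDim_ge {F : Type*} [Field F] {m : ℕ}
    (V : Submodule F (Fin m → F)) (t : ℕ) (ht : 0 < t) :
    2 * Module.finrank F V ≤ innerDim t V + outerDim t V := by
  obtain ⟨U, hU, hVU, hUD⟩ := exists_isSparseSubspace_le_finrank_eq_outerDim ht V
  obtain ⟨W, hWU, hW, hWV⟩ := hU.exists_le_finrank_eq (finrank_mono hVU)
  have hsup : finrank F ↥(V ⊔ W) ≤ finrank F U := finrank_mono (sup_le hVU hWU)
  have hinner : finrank F ↥(V ⊓ W) ≤ innerDim t V := finrank_inf_le_innerDim hW hWV.le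
  have hmodular := finrank_sup_add_finrank_inf_eq V W
  omega
end

section
/- Let F be a field and let M ∈ F^{m×n} be a matrix of rank n. If M is (m,n,r,t)-strongly row rigid, then there is no (n + r − 1, t) linear data structure computing M. -/
/-- `M` is `(m,n,r,t)`-row rigid if every matrix differing from `M` in at most `t`
entries in each row has rank at least `r`. -/
def RowRigid {F : Type*} [Field F] {m n : ℕ} (r t : ℕ) (M : Matrix (Fin m) (Fin n) F) : Prop :=
  ∀ N : Matrix (Fin m) (Fin n) F,
    (∀ i, {j | M i j ≠ N i j}.ncard ≤ t) → r ≤ N.rank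

/-- `M` is `(m,n,r,t)`-strongly row rigid if `M * T` is row rigid for every invertible `T`. -/
def StronglyRowRigid {F : Type*} [Field F] {m n : ℕ} (r t : ℕ)
    (M : Matrix (Fin m) (Fin n) F) : Prop :=
  ∀ T : Matrix (Fin n) (Fin n) F, IsUnit T → RowRigid r t (M * T)

/-- An `(s,t)` linear data structure for `M` is a factorization `M = Q * P` with `Q`
a `t`-row-sparse `m × s` matrix and `P` an `s × n` matrix. -/
def HasLDS {F : Type*} [Field F] {m n : ℕ} (s t : ℕ) (M : Matrix (Fin m) (Fin n) F) : Prop :=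
  ∃ (Q : Matrix (Fin m) (Fin s) F) (P : Matrix (Fin s) (Fin n) F),
    RowSparse t Q ∧ M = Q * P

/-!
Given `M = Q * P` with `Q` `t`-row-sparse and `P` having `n + r - 1` rows, `P` has rank `n`, so
some `n` of its rows form an invertible block `P₁`. Splitting `Q * P` along these rows, `M * P₁⁻¹`
is the sparse matrix of the matching columns of `Q` plus a matrix factoring through the remaining
`r - 1` rows of `P`. Removing the sparse part therefore leaves rank at most `r - 1`, against the
row rigidity of `M * P₁⁻¹`.
-/

open Function

namespace Matrix

variable {F : Type*} [Field F] {m s n : Type*} [Fintype s] [Fintype n] [DecidableEq n]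

theorem exists_isUnit_submatrix_of_rank_eq_card (P : Matrix s n F)
    (hP : P.rank = Fintype.card n) :
    ∃ σ : n → s, Injective σ ∧ IsUnit (P.submatrix σ id) := by
  obtain ⟨κ, a, ha, hspan, hli⟩ := exists_linearIndependent' F P.row
  have : Finite κ := Finite.of_injective a ha
  have hspan_top : Submodule.span F (Set.range P.row) = ⊤ := by
    apply Submodule.eq_top_of_finrank_eq
    rw [← rank_eq_finrank_span_row, hP, Module.finrank_fintype_fun_eq_card]
  let b := Module.Basis.mk hli (hspan.trans hspan_top).ge
  obtain ⟨e⟩ : Nonempty (n ≃ κ) := Finite.card_eq.mp <| by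
    rw [← Module.finrank_eq_nat_card_basis b, Module.finrank_fintype_fun_eq_card,
      Nat.card_eq_fintype_card]
  exact ⟨a ∘ e, ha.comp e.injective, linearIndependent_rows_iff_isUnit.mp (hli.comp e e.injective)⟩

theorem rank_mul_mul_inv_sub_submatrix_le (Q : Matrix m s F) (P : Matrix s n F)
    {σ : n → s} (hσ : Injective σ) (hP : IsUnit (P.submatrix σ id)) :
    (Q * P * (P.submatrix σ id)⁻¹ - Q.submatrix id σ).rank ≤
      Fintype.card s - Fintype.card n := by
  classical
  let K := {k // k ∉ Set.range σ}
  let e : n ⊕ K ≃ s :=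
    (Equiv.sumCongr (Equiv.ofInjective σ hσ) (Equiv.refl K)).trans (Equiv.sumCompl _)
  have hsplit : Q * P = Q.submatrix id σ * P.submatrix σ id +
      Q.submatrix id (Subtype.val : K → s) * P.submatrix (Subtype.val : K → s) id := by
    rw [← fromCols_mul_fromRows, ← submatrix_id_id (Q * P), ← submatrix_mul_equiv Q P id e id]
    congr 1
    · ext i (_ | _) <;> rfl
    · ext (_ | _) j <;> rfl
  have hdet : IsUnit (P.submatrix σ id).det := (isUnit_iff_isUnit_det _).mp hP
  rw [hsplit, Matrix.add_mul, mul_nonsing_inv_cancel_right _ _ hdet, add_sub_cancel_left,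
    Matrix.mul_assoc]
  calc _ ≤ (Q.submatrix id (Subtype.val : K → s)).rank := rank_mul_le_left _ _
    _ ≤ Fintype.card K := rank_le_card_width _
    _ = Fintype.card s - Fintype.card n := by
      rw [Fintype.card_subtype_compl, Set.card_range_of_injective hσ]

end Matrix

theorem RowSparse.submatrix_of_injective {F : Type*} [Field F] {m k l t : ℕ}
    {Q : Matrix (Fin m) (Fin k) F} (hQ : RowSparse t Q) {σ : Fin l → Fin k}
    (hσ : Injective σ) : RowSparse t (Q.submatrix id σ) := fun i =>
  calc (σ ⁻¹' {j | Q i j ≠ 0}).ncard ≤ {j | Q i j ≠ 0}.ncard :=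
        Set.ncard_le_ncard_of_injOn σ (fun _ hj => hj) hσ.injOn
    _ ≤ t := hQ i

theorem RowRigid.le_rank_sub {F : Type*} [Field F] {m n r t : ℕ}
    {M E : Matrix (Fin m) (Fin n) F} (hM : RowRigid r t M) (hE : RowSparse t E) :
    r ≤ (M - E).rank :=
  hM _ fun i => by
    simpa only [Matrix.sub_apply, ne_eq, sub_eq_self, eq_comm (a := M _ _)] using hE i

theorem stronglyRowRigid_implies_no_lds_general {F : Type*} [Field F] {m n : ℕ}
    (M : Matrix (Fin m) (Fin n) F) (hrank : M.rank = n)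
    (r t : ℕ) (hr : 0 < r)
    (hrig : StronglyRowRigid r t M) :
    ¬ HasLDS (n + r - 1) t M := by
  rintro ⟨Q, P, hQ, rfl⟩
  have hP : P.rank = Fintype.card (Fin n) :=
    le_antisymm P.rank_le_card_width (by simpa [hrank] using Q.rank_mul_le_right P)
  obtain ⟨σ, hσ, hP₁⟩ := P.exists_isUnit_submatrix_of_rank_eq_card hP
  have hlow := (hrig _ (Matrix.isUnit_nonsing_inv_iff.mpr hP₁)).le_rank_sub
    (hQ.submatrix_of_injective hσ)
  have hup := Q.rank_mul_mul_inv_sub_submatrix_le P hσ hP₁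
  simp only [Fintype.card_fin] at hup
  omega

/-- if `M` has rank `n` and is `(m,n,r,t)`-strongly row rigid, then there is
no `(n + r - 1, t)` linear data structure computing `M`. -/
theorem stronglyRowRigid_implies_no_lds {F : Type*} [Field F] {m n : ℕ}
    (M : Matrix (Fin m) (Fin n) F) (hrank : M.rank = n)
    (r t : ℕ) (hr : 0 < r) (ht : 0 < t)
    (hrig : StronglyRowRigid r t M) :
    ¬ HasLDS (n + r - 1) t M :=
  stronglyRowRigid_implies_no_lds_general M hrank r t hr hrig
end

section
/- For every constant 0 < ε < 1 and every constant c ≥ 1, there exists a constant α > 0 such that the following holds for every field F and all integers m ≥ n ≥ 2: if M ∈ F^{m×n} admits no factorization M = Q·P with Q ∈ F^{m×s}, s ≤ n/(1−ε), each row of Q having at most (log n)^c nonzero entries, and P ∈ F^{s×n}, then M contains a submatrix M' ∈ F^{m×n'}, formed by n' ≥ α·(log n)^{c−1} of the columns of M, which is (m, n', ε·n', α·(log n)^{c−1})-row rigid. -/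
/-!
Suppose every set of `a ≥ β` columns of `M` fails to be rigid. Then the submatrix on those
columns is `S + N` with `S` having at most `t` nonzeros per row and `rank N < ε a`, so `N` is
`N_C Λ` for a set `C` of fewer than `ε a` of the columns. Since `N_C = M_C - S_C`, this gives
`M = M_C Λ + S (1 - E_C Λ)`, where `E_C` selects the columns `C`: the submatrix is a sparse
matrix times something, plus a recombination of a smaller submatrix of `M`. Recursing on `M_C`,
the column counts decay geometrically, so the inner dimensions add up to at most
`a / (1 - ε)`, while each of the at most `log_{1/ε} a + 1` levels adds `t` nonzeros per row.
With `β = t = α (log n)^{c-1}` and `α = (2 + log_{1/ε} 2)⁻¹` this is a factorization of `M`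
of the forbidden kind.
-/

/-- `M` is `(m,n,r,t)`-row rigid (with real parameters): every matrix differing from `M`
in at most `t` entries in each row has rank at least `r`. -/
def RowRigidR {F : Type*} [Field F] {m n : ℕ} (r t : ℝ)
    (M : Matrix (Fin m) (Fin n) F) : Prop :=
  ∀ N : Matrix (Fin m) (Fin n) F,
    (∀ i, ({j | M i j ≠ N i j}.ncard : ℝ) ≤ t) → r ≤ (N.rank : ℝ)

theorem Real.logb_add_one_le_logb {b x y : ℝ} (hb : 1 < b) (hx : 0 < x) (h : b * x ≤ y) :
    Real.logb b x + 1 ≤ Real.logb b y := by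
  have hb0 : 0 < b := by linarith
  calc Real.logb b x + 1 = Real.logb b (b * x) := by
        rw [Real.logb_mul hb0.ne' hx.ne', Real.logb_self_eq_one hb, add_comm]
    _ ≤ Real.logb b y := Real.logb_le_logb_of_le hb (by positivity) h

theorem Fin.ncard_support_append {M : Type*} [Zero M] {a b : ℕ}
    (u : Fin a → M) (v : Fin b → M) :
    (Function.support (Fin.append u v)).ncard =
      (Function.support u).ncard + (Function.support v).ncard := by
  classical
  simp only [Set.ncard_eq_toFinset_card', Set.toFinset_ofPred, Function.support,
    Finset.card_filter, Fin.sum_univ_add, Fin.append_left, Fin.append_right]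

theorem Matrix.of_append_mul_append {ρ ι R : Type*} [NonUnitalNonAssocSemiring R] {a b : ℕ}
    (Q₁ : Matrix ρ (Fin a) R) (Q₂ : Matrix ρ (Fin b) R)
    (P₁ : Matrix (Fin a) ι R) (P₂ : Matrix (Fin b) ι R) :
    Matrix.of (fun i => Fin.append (Q₁ i) (Q₂ i)) * Matrix.of (Fin.append P₁ P₂) =
      Q₁ * P₁ + Q₂ * P₂ := by
  ext i j
  simp [Matrix.mul_apply, Fin.sum_univ_add, Fin.append_left P₁ P₂, Fin.append_right P₁ P₂]

theorem Matrix.submatrix_id_eq_mul {m n o R : Type*} [Fintype n] [DecidableEq n]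
    [NonAssocSemiring R] (A : Matrix m n R) (C : o → n) :
    A.submatrix id C = A * (1 : Matrix n n R).submatrix id C := by
  simpa using (Matrix.mul_submatrix_one (Equiv.refl n) C A).symm

theorem Matrix.exists_cols_mul_eq_self {m n F : Type*} [Fintype n] [Field F]
    (A : Matrix m n F) :
    ∃ (C : Fin A.rank → n) (Λ : Matrix (Fin A.rank) n F), A.submatrix id C * Λ = A := by
  obtain ⟨κ, a, ha, hspan, hli⟩ := exists_linearIndependent' F A.col
  have : Fintype κ := Fintype.ofInjective a ha
  have hcard : Fintype.card κ = A.rank := by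
    rw [A.rank_eq_finrank_span_cols, ← hspan, finrank_span_eq_card hli]
  let e := Fintype.equivFinOfCardEq hcard
  have hcol (j : n) : A.col j ∈ Submodule.span F (Set.range (A.col ∘ a ∘ e.symm)) := by
    change A.col j ∈ Submodule.span F (Set.range ((A.col ∘ a) ∘ e.symm))
    rw [e.symm.surjective.range_comp, hspan]
    exact Submodule.subset_span ⟨j, rfl⟩
  choose Λ hΛ using fun j => (Submodule.mem_span_range_iff_exists_fun F).mp (hcol j)
  refine ⟨a ∘ e.symm, Matrix.of fun l j => Λ j l, ?_⟩
  ext i j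
  simpa [Matrix.mul_apply, mul_comm] using congrFun (hΛ j) i

section SparseFactorization

variable {ρ ι R : Type*} [Semiring R]

def HasSparseFactorization (M : Matrix ρ ι R) (s w : ℝ) : Prop :=
  ∃ (k : ℕ) (Q : Matrix ρ (Fin k) R) (P : Matrix (Fin k) ι R),
    (k : ℝ) ≤ s ∧ (∀ i, ({j | Q i j ≠ 0}.ncard : ℝ) ≤ w) ∧ M = Q * P

theorem hasSparseFactorization_self {a : ℕ} {w : ℝ} (M : Matrix ρ (Fin a) R)
    (hw : ∀ i, ((Function.support (M i)).ncard : ℝ) ≤ w) :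
    HasSparseFactorization M a w :=
  ⟨a, M, 1, le_rfl, hw, (Matrix.mul_one M).symm⟩

namespace HasSparseFactorization

variable {M A B : Matrix ρ ι R} {s s' s₁ s₂ w w' w₁ w₂ : ℝ}

theorem mono (h : HasSparseFactorization M s w) (hs : s ≤ s') (hw : w ≤ w') :
    HasSparseFactorization M s' w' := by
  obtain ⟨k, Q, P, hk, hQ, rfl⟩ := h
  exact ⟨k, Q, P, hk.trans hs, fun i => (hQ i).trans hw, rfl⟩

theorem mul_right {κ : Type*} [Fintype ι] (h : HasSparseFactorization M s w)
    (T : Matrix ι κ R) : HasSparseFactorization (M * T) s w := by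
  obtain ⟨k, Q, P, hk, hQ, rfl⟩ := h
  exact ⟨k, Q, P * T, hk, hQ, Matrix.mul_assoc Q P T⟩

theorem add (hA : HasSparseFactorization A s₁ w₁) (hB : HasSparseFactorization B s₂ w₂) :
    HasSparseFactorization (A + B) (s₁ + s₂) (w₁ + w₂) := by
  obtain ⟨k₁, Q₁, P₁, hk₁, hQ₁, rfl⟩ := hA
  obtain ⟨k₂, Q₂, P₂, hk₂, hQ₂, rfl⟩ := hB
  refine ⟨k₁ + k₂, Matrix.of fun i => Fin.append (Q₁ i) (Q₂ i),
    Matrix.of (Fin.append P₁ P₂), by push_cast; linarith, fun i => ?_,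
    (Matrix.of_append_mul_append Q₁ Q₂ P₁ P₂).symm⟩
  change ((Function.support (Fin.append (Q₁ i) (Q₂ i))).ncard : ℝ) ≤ w₁ + w₂
  rw [Fin.ncard_support_append, Nat.cast_add]
  exact add_le_add (hQ₁ i) (hQ₂ i)

end HasSparseFactorization

end SparseFactorization

theorem exists_eq_cols_mul_add_sparse_mul_of_not_rowRigidR {F : Type*} [Field F] {m a : ℕ}
    {r t : ℝ} {A : Matrix (Fin m) (Fin a) F} (hA : ¬ RowRigidR r t A) :
    ∃ (g : ℕ) (C : Fin g → Fin a) (Λ : Matrix (Fin g) (Fin a) F)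
      (S : Matrix (Fin m) (Fin a) F) (T : Matrix (Fin a) (Fin a) F),
      (g : ℝ) < r ∧ (∀ i, ((Function.support (S i)).ncard : ℝ) ≤ t) ∧
      A = A.submatrix id C * Λ + S * T := by
  simp only [RowRigidR, not_forall, not_le] at hA
  obtain ⟨N, hNA, hN⟩ := hA
  obtain ⟨C, Λ, hCΛ⟩ := N.exists_cols_mul_eq_self
  let E := (1 : Matrix (Fin a) (Fin a) F).submatrix id C
  refine ⟨N.rank, C, Λ, A - N, 1 - E * Λ, hN, fun i => ?_, ?_⟩
  · simpa only [Function.support, Matrix.sub_apply, sub_ne_zero] using hNA i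
  · -- `N = N_C Λ` and `N_C = A_C - (A - N)_C`
    rw [Matrix.submatrix_id_eq_mul] at hCΛ ⊢
    rw [Matrix.mul_sub, Matrix.mul_one, Matrix.sub_mul, ← Matrix.mul_assoc,
      ← Matrix.mul_assoc N, hCΛ]
    abel

theorem hasSparseFactorization_submatrix_of_forall_not_rowRigidR {F : Type*} [Field F]
    {m : ℕ} {ι : Type*} {M : Matrix (Fin m) ι F} {ε β t : ℝ} (hε0 : 0 < ε) (hε1 : ε < 1)
    (hβ : 0 ≤ β) (ht : 0 ≤ t)
    (hM : ∀ (a : ℕ) (f : Fin a → ι), β ≤ a → ¬ RowRigidR (ε * a) t (M.submatrix id f))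
    (a : ℕ) (f : Fin a → ι) :
    HasSparseFactorization (M.submatrix id f) (a / (1 - ε))
      (β + t * (Real.logb ε⁻¹ a + 1)) := by
  induction a using Nat.strong_induction_on with
  | _ a IH =>
  have h1ε : 0 < 1 - ε := by linarith
  have hε' : 1 < ε⁻¹ := one_lt_inv_iff₀.mpr ⟨hε0, hε1⟩
  have hlogb : 0 ≤ Real.logb ε⁻¹ a := by
    rcases Nat.eq_zero_or_pos a with rfl | ha
    · simp
    · exact Real.logb_nonneg hε' (by exact_mod_cast ha)
  by_cases hsmall : (a : ℝ) < β
  · refine (hasSparseFactorization_self (w := a) _ fun i => ?_).mono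
      (le_div_self (Nat.cast_nonneg a) h1ε (by linarith)) (by nlinarith)
    exact_mod_cast (Set.ncard_le_card _).trans_eq (Nat.card_fin a)
  obtain ⟨g, C, Λ, S, T, hg, hS, hfac⟩ :=
    exists_eq_cols_mul_add_sparse_mul_of_not_rowRigidR (hM a f (not_lt.mp hsmall))
  have hga : g < a := by
    exact_mod_cast hg.trans_le (mul_le_of_le_one_left (Nat.cast_nonneg a) hε1.le)
  have hcols : HasSparseFactorization ((M.submatrix id f).submatrix id C) (g / (1 - ε))
      (β + t * Real.logb ε⁻¹ a) := by
    rcases Nat.eq_zero_or_pos g with rfl | hg0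
    -- `logb 0 = 0` makes the recursive bound too weak here; a matrix without columns is trivial.
    · refine (hasSparseFactorization_self (w := 0) _ fun i => ?_).mono (by simp) (by positivity)
      simp [Set.eq_empty_of_isEmpty]
    · rw [Matrix.submatrix_submatrix]
      refine (IH g hga (f ∘ C)).mono le_rfl ?_
      have := Real.logb_add_one_le_logb hε' (by positivity)
        (show ε⁻¹ * g ≤ a by rw [inv_mul_le_iff₀ hε0]; exact hg.le)
      nlinarith
  rw [hfac]
  refine ((hcols.mul_right Λ).add ((hasSparseFactorization_self S hS).mul_right T)).mono ?_ ?_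
  · rw [div_add' _ _ _ h1ε.ne', div_le_div_iff_of_pos_right h1ε]
    nlinarith
  · linarith

theorem polylog_lds_lower_bound_gives_rigid_submatrix_general
    (ε : ℝ) (hε0 : 0 < ε) (hε1 : ε < 1) (c : ℝ) :
    ∃ α : ℝ, 0 < α ∧
      ∀ (F : Type) (_ : Field F) (m n : ℕ), 2 ≤ n → n ≤ m →
        ∀ M : Matrix (Fin m) (Fin n) F,
          (¬ ∃ (s : ℕ) (Q : Matrix (Fin m) (Fin s) F) (P : Matrix (Fin s) (Fin n) F),
            (s : ℝ) ≤ (n : ℝ) / (1 - ε) ∧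
            (∀ i, ({j | Q i j ≠ 0}.ncard : ℝ) ≤ (Real.logb 2 n) ^ c) ∧
            M = Q * P) →
          ∃ (n' : ℕ) (f : Fin n' → Fin n),
            α * (Real.logb 2 n) ^ (c - 1) ≤ (n' : ℝ) ∧
            RowRigidR (ε * n') (α * (Real.logb 2 n) ^ (c - 1)) (M.submatrix id f) := by
  have hε' : 1 < ε⁻¹ := one_lt_inv_iff₀.mpr ⟨hε0, hε1⟩
  set K := Real.logb ε⁻¹ 2
  have hK : 0 ≤ K := Real.logb_nonneg hε' one_le_two
  refine ⟨(2 + K)⁻¹, by positivity, fun F _ m n hn _ M hM => ?_⟩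
  set b := Real.logb 2 n
  have hb : 1 ≤ b := by
    rw [Real.le_logb_iff_rpow_le one_lt_two (by positivity), Real.rpow_one]
    exact_mod_cast hn
  have ht : 0 ≤ (2 + K)⁻¹ * b ^ (c - 1) := by positivity
  by_contra! hrigid
  have hfac := hasSparseFactorization_submatrix_of_forall_not_rowRigidR hε0 hε1 ht ht hrigid n id
  rw [Matrix.submatrix_id_id] at hfac
  refine hM (hfac.mono le_rfl ?_)
  have hlogb : Real.logb ε⁻¹ n = b * K := by
    rw [mul_comm, Real.mul_logb two_ne_zero (by norm_num) (by norm_num)]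
  calc (2 + K)⁻¹ * b ^ (c - 1) + (2 + K)⁻¹ * b ^ (c - 1) * (Real.logb ε⁻¹ n + 1)
      = b ^ (c - 1) * ((2 + b * K) / (2 + K)) := by rw [hlogb]; field_simp; ring
    _ ≤ b ^ (c - 1) * b := by
      gcongr
      rw [div_le_iff₀ (by positivity)]
      nlinarith
    _ = b ^ c := by rw [← Real.rpow_add_one (by positivity)]; ring_nf

/-- poly-logarithmic lower bounds: for all constants `0 < ε < 1` and
`c ≥ 1` there is `α > 0` such that for every field `F` and all `m ≥ n ≥ 2`: if
`M ∈ F^{m×n}` admits no factorization `M = Q * P` with `s ≤ n/(1-ε)` and each row of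
`Q` having at most `(log n)^c` nonzero entries, then `M` contains a submatrix on
`n' ≥ α·(log n)^{c-1}` of its columns that is `(m, n', ε·n', α·(log n)^{c-1})`-row
rigid. -/
theorem polylog_lds_lower_bound_gives_rigid_submatrix
    (ε : ℝ) (hε0 : 0 < ε) (hε1 : ε < 1) (c : ℝ) (hc : 1 ≤ c) :
    ∃ α : ℝ, 0 < α ∧
      ∀ (F : Type) (_ : Field F) (m n : ℕ), 2 ≤ n → n ≤ m →
        ∀ M : Matrix (Fin m) (Fin n) F,
          (¬ ∃ (s : ℕ) (Q : Matrix (Fin m) (Fin s) F) (P : Matrix (Fin s) (Fin n) F),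
            (s : ℝ) ≤ (n : ℝ) / (1 - ε) ∧
            (∀ i, ({j | Q i j ≠ 0}.ncard : ℝ) ≤ (Real.logb 2 n) ^ c) ∧
            M = Q * P) →
          ∃ (n' : ℕ) (f : Fin n' → Fin n),
            α * (Real.logb 2 n) ^ (c - 1) ≤ (n' : ℝ) ∧
            RowRigidR (ε * n') (α * (Real.logb 2 n) ^ (c - 1)) (M.submatrix id f) :=
  polylog_lds_lower_bound_gives_rigid_submatrix_general ε hε0 hε1 c
end

section
/- Let F be a field, let δ ∈ (0,1), and let q, t, r be positive integers. Let E ∈ F^{m'×m} be a matrix with the following property: for every set R of row indices of E with |R| ≥ (1−δ)·m' and every i ∈ {1,...,m}, the i-th standard basis vector of F^m lies in the span of at most q rows of E whose indices belong to R. If M ∈ F^{m×n} is (m, n, r, t+1)-row rigid, then the matrix A = E·M ∈ F^{m'×n} is (m', n, r, δ·t·m'/q)-globally rigid. -/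
/-- `M` is `(m,n,r,t)`-globally rigid (with a real sparsity parameter `t`): every matrix
differing from `M` in at most `t` entries in total has rank at least `r`. -/
def GloballyRigidR {F : Type*} [Field F] {m n : ℕ} (r : ℕ) (t : ℝ)
    (M : Matrix (Fin m) (Fin n) F) : Prop :=
  ∀ N : Matrix (Fin m) (Fin n) F,
    (({p : Fin m × Fin n | M p.1 p.2 ≠ N p.1 p.2}.ncard : ℝ) ≤ t) → r ≤ N.rank

/-- row rigidity to global rigidity via LDC: if `E ∈ F^{m'×m}` has the
property that for every set `R` of at least `(1-δ)·m'` rows and every `i`, the `i`-th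
standard basis vector of `F^m` is in the span of at most `q` rows of `E` with indices in
`R`, and `M` is `(m,n,r,t+1)`-row rigid, then `E·M` is `(m',n,r,δ·t·m'/q)`-globally
rigid. -/
theorem rowRigid_to_globallyRigid {F : Type*} [Field F] {m m' n : ℕ}
    (δ : ℝ) (hδ0 : 0 < δ) (hδ1 : δ < 1)
    (q t r : ℕ) (hq : 0 < q) (ht : 0 < t) (hr : 0 < r)
    (E : Matrix (Fin m') (Fin m) F)
    (hE : ∀ R : Finset (Fin m'), (1 - δ) * (m' : ℝ) ≤ (R.card : ℝ) →
      ∀ i : Fin m, ∃ S : Finset (Fin m'), S ⊆ R ∧ S.card ≤ q ∧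
        (Pi.single i 1 : Fin m → F) ∈
          Submodule.span F ((fun j => E j) '' (↑S : Set (Fin m'))))
    (M : Matrix (Fin m) (Fin n) F) (hM : RowRigid r (t + 1) M) :
    GloballyRigidR r (δ * t * m' / q) (E * M) := by
  classical
  intro N hN
  set A := E * M with hA
  -- per-row error counts
  set c : Fin m' → ℕ := fun j => (Finset.univ.filter (fun k => A j k ≠ N j k)).card with hc
  -- total errors
  have hncard : ({p : Fin m' × Fin n | A p.1 p.2 ≠ N p.1 p.2}.ncard : ℕ)
      = (Finset.univ.filter (fun p : Fin m' × Fin n => A p.1 p.2 ≠ N p.1 p.2)).card := by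
    rw [Set.ncard_eq_toFinset_card']
    congr 1
    ext p
    simp
  have hT : (Finset.univ.filter (fun p : Fin m' × Fin n => A p.1 p.2 ≠ N p.1 p.2)).card
      = ∑ j, c j := by
    rw [Finset.card_filter, Fintype.sum_prod_type]
    simp [hc, Finset.card_filter]
  have hTle : ((∑ j, c j : ℕ) : ℝ) ≤ δ * t * m' / q := by
    rw [← hT, ← hncard]; exact hN
  set tq : ℕ := t / q with htq
  -- bad rows
  set B : Finset (Fin m') := Finset.univ.filter (fun j => ¬ (c j ≤ tq)) with hB
  have hBsum : B.card * (tq + 1) ≤ ∑ j, c j := by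
    calc B.card * (tq + 1) = ∑ _j ∈ B, (tq + 1) := by rw [Finset.sum_const, smul_eq_mul]
    _ ≤ ∑ j ∈ B, c j := by
        refine Finset.sum_le_sum fun j hj => ?_
        simp only [hB, Finset.mem_filter] at hj
        omega
    _ ≤ ∑ j, c j := Finset.sum_le_sum_of_subset (Finset.subset_univ B)
  have hq' : (0 : ℝ) < q := by exact_mod_cast hq
  have ht' : (0 : ℝ) < t := by exact_mod_cast ht
  have htlt : t < (tq + 1) * q := by
    show t < (t / q + 1) * q
    have h1 := Nat.div_add_mod t q
    have h2 := Nat.mod_lt t hq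
    calc t < q * (t / q) + q := by omega
    _ = (t / q + 1) * q := by ring
  have htlt' : (t : ℝ) < ((tq : ℝ) + 1) * q := by exact_mod_cast htlt
  have hBle : (B.card : ℝ) ≤ δ * m' := by
    have h1 : (B.card : ℝ) * ((tq : ℝ) + 1) ≤ δ * t * m' / q := by
      calc (B.card : ℝ) * ((tq : ℝ) + 1) = ((B.card * (tq + 1) : ℕ) : ℝ) := by push_cast; ring
      _ ≤ ((∑ j, c j : ℕ) : ℝ) := by exact_mod_cast hBsum
      _ ≤ δ * t * m' / q := hTle
    have h2 : (B.card : ℝ) * ((t : ℝ) / q) ≤ δ * t * m' / q := by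
      refine le_trans ?_ h1
      have : (t : ℝ) / q ≤ (tq : ℝ) + 1 := by
        rw [div_le_iff₀ hq']; exact le_of_lt htlt'
      exact mul_le_mul_of_nonneg_left this (Nat.cast_nonneg _)
    rw [mul_div_assoc'] at h2
    rw [div_le_div_iff₀ hq' hq'] at h2
    have h3 : (B.card : ℝ) * t ≤ δ * t * m' := le_of_mul_le_mul_right h2 hq'
    have h4 : (B.card : ℝ) * t ≤ (δ * m') * t := by
      calc (B.card : ℝ) * t ≤ δ * t * m' := h3
      _ = (δ * m') * t := by ring
    exact le_of_mul_le_mul_right h4 ht'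
  -- good rows
  set Rg : Finset (Fin m') := Finset.univ.filter (fun j => c j ≤ tq) with hRg
  have hcardRB : Rg.card + B.card = m' := by
    have := Finset.card_filter_add_card_filter_not
      (s := (Finset.univ : Finset (Fin m'))) (p := fun j => c j ≤ tq)
    simpa [hRg, hB] using this
  have hRgood : (1 - δ) * (m' : ℝ) ≤ (Rg.card : ℝ) := by
    have : (Rg.card : ℝ) + (B.card : ℝ) = m' := by exact_mod_cast hcardRB
    linarith
  -- decoding coefficients
  choose S hSR hScard hspan using hE Rg hRgood
  have key : ∀ i, ∃ l : Fin m' →₀ F, (↑l.support : Set (Fin m')) ⊆ (↑(S i) : Set (Fin m')) ∧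
      Finsupp.linearCombination F (fun j => E j) l = Pi.single i 1 := by
    intro i
    obtain ⟨l, hl, hl2⟩ := (Finsupp.mem_span_image_iff_linearCombination F).mp (hspan i)
    exact ⟨l, (Finsupp.mem_supported F l).mp hl, hl2⟩
  choose l hlsupp hlcomb using key
  set C : Matrix (Fin m) (Fin m') F := Matrix.of (fun i j => l i j) with hCdef
  have hCE : C * E = 1 := by
    ext i k
    have h1 : ∑ j ∈ (l i).support, l i j * E j k = (Pi.single i 1 : Fin m → F) k := by
      have h0 := congrFun (hlcomb i) k
      rw [Finsupp.linearCombination_apply, Finsupp.sum, Finset.sum_apply] at h0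
      simpa using h0
    have h2 : ∑ j, C i j * E j k = ∑ j ∈ (l i).support, l i j * E j k := by
      refine (Finset.sum_subset (Finset.subset_univ _) ?_).symm
      intro j _ hj
      simp only [Finsupp.notMem_support_iff] at hj
      simp [hCdef, hj]
    rw [Matrix.mul_apply, h2, h1]
    simp [Matrix.one_apply, Pi.single_apply, eq_comm]
  have hMeq : M = C * A := by
    rw [hA, ← Matrix.mul_assoc, hCE, Matrix.one_mul]
  set N' : Matrix (Fin m) (Fin n) F := C * N with hN'
  have hrow : ∀ i, {k | M i k ≠ N' i k}.ncard ≤ t + 1 := by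
    intro i
    have hsub : (Finset.univ.filter (fun k => M i k ≠ N' i k)) ⊆
        (S i).biUnion (fun j => Finset.univ.filter (fun k => A j k ≠ N j k)) := by
      intro k hk
      simp only [Finset.mem_filter, Finset.mem_univ, true_and] at hk
      by_contra hcon
      simp only [Finset.mem_biUnion, Finset.mem_filter, Finset.mem_univ, true_and,
        not_exists, not_and, not_not] at hcon
      apply hk
      rw [hMeq, hN', Matrix.mul_apply, Matrix.mul_apply]
      refine Finset.sum_congr rfl fun j _ => ?_
      by_cases hj : l i j = 0
      · simp [hCdef, hj]
      · have hjS : j ∈ S i := hlsupp i (by simpa [Finsupp.mem_support_iff] using hj)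
        rw [hcon j hjS]
    have hcount : {k | M i k ≠ N' i k}.ncard
        = (Finset.univ.filter (fun k => M i k ≠ N' i k)).card := by
      rw [Set.ncard_eq_toFinset_card']
      congr 1
      ext k
      simp
    rw [hcount]
    calc (Finset.univ.filter (fun k => M i k ≠ N' i k)).card
        ≤ ((S i).biUnion (fun j => Finset.univ.filter (fun k => A j k ≠ N j k))).card :=
          Finset.card_le_card hsub
    _ ≤ ∑ j ∈ S i, (Finset.univ.filter (fun k => A j k ≠ N j k)).card :=
          Finset.card_biUnion_le
    _ ≤ ∑ _j ∈ S i, tq := by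
          refine Finset.sum_le_sum fun j hj => ?_
          have := hSR i hj
          simp only [hRg, Finset.mem_filter] at this
          exact this.2
    _ = (S i).card * tq := by rw [Finset.sum_const, smul_eq_mul]
    _ ≤ q * tq := Nat.mul_le_mul_right _ (hScard i)
    _ ≤ t := by
          have := Nat.div_mul_le_self t q
          calc q * tq = tq * q := Nat.mul_comm _ _
          _ ≤ t := this
    _ ≤ t + 1 := Nat.le_succ t
  calc (r : ℕ) ≤ N'.rank := hM N' hrow
  _ ≤ N.rank := Matrix.rank_mul_le_right C N
end

section
/- Let F be a field, let δ ∈ (0,1), and let q, t, r be positive integers. Let E ∈ F^{m'×m} be a matrix with the following property: for every set R of row indices of E with |R| ≥ (1−δ)·m' and every i ∈ {1,...,m}, the i-th standard basis vector of F^m lies in the span of at most q rows of E whose indices belong to R. If M ∈ F^{m×n} is (m, n, r, t+1)-strongly row rigid, then the matrix A = E·M ∈ F^{m'×n} is (m', n, r, δ·t·m'/q)-strongly globally rigid, i.e., A·T is (m', n, r, δ·t·m'/q)-globally rigid for every invertible T ∈ F^{n×n}. -/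
/-- `M` is `(m,n,r,t)`-strongly globally rigid if `M * T` is globally rigid for every
invertible `T`. -/
def StronglyGloballyRigidR {F : Type*} [Field F] {m n : ℕ} (r : ℕ) (t : ℝ)
    (M : Matrix (Fin m) (Fin n) F) : Prop :=
  ∀ T : Matrix (Fin n) (Fin n) F, IsUnit T → GloballyRigidR r t (M * T)


theorem stronglyRowRigid_to_stronglyGloballyRigid' {F : Type*} [Field F] {m m' n : ℕ}
    (δ : ℝ) (hδ0 : 0 < δ) (hδ1 : δ < 1)
    (q t r : ℕ) (hq : 0 < q) (ht : 0 < t) (hr : 0 < r)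
    (E : Matrix (Fin m') (Fin m) F)
    (hE : ∀ R : Finset (Fin m'), (1 - δ) * (m' : ℝ) ≤ (R.card : ℝ) →
      ∀ i : Fin m, ∃ S : Finset (Fin m'), S ⊆ R ∧ S.card ≤ q ∧
        (Pi.single i 1 : Fin m → F) ∈
          Submodule.span F ((fun j => E j) '' (↑S : Set (Fin m'))))
    (M : Matrix (Fin m) (Fin n) F) (hM : ∀ T : Matrix (Fin n) (Fin n) F, IsUnit T →
      ∀ N : Matrix (Fin m) (Fin n) F,
        (∀ i, {j | (M * T) i j ≠ N i j}.ncard ≤ t + 1) → r ≤ N.rank) :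
    ∀ T : Matrix (Fin n) (Fin n) F, IsUnit T →
      ∀ N : Matrix (Fin m') (Fin n) F,
        (({p : Fin m' × Fin n | (E * M * T) p.1 p.2 ≠ N p.1 p.2}.ncard : ℝ) ≤ δ * t * m' / q) →
        r ≤ N.rank := by
  classical
  intro T hT N hN
  set A : Matrix (Fin m') (Fin n) F := E * M * T with hA
  set cnt : Fin m' → ℕ := fun j => (Finset.univ.filter fun k => A j k ≠ N j k).card with hcnt
  -- total count
  have hncard_eq : {p : Fin m' × Fin n | A p.1 p.2 ≠ N p.1 p.2}.ncard = ∑ j, cnt j := by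
    rw [Set.ncard_eq_toFinset_card']
    simp only [Set.toFinset_setOf, hcnt, Finset.card_filter]
    rw [Fintype.sum_prod_type]
  set Bad : Finset (Fin m') := Finset.univ.filter fun j => t / q < cnt j with hBadDef
  -- bad rows are few
  have hsum : Bad.card * (t / q + 1) ≤ ∑ j, cnt j := by
    calc Bad.card * (t / q + 1) = ∑ _j ∈ Bad, (t / q + 1) := by
          rw [Finset.sum_const, smul_eq_mul]
      _ ≤ ∑ j ∈ Bad, cnt j := Finset.sum_le_sum (fun j hj => by
          have := (Finset.mem_filter.mp hj).2; omega)
      _ ≤ ∑ j, cnt j := Finset.sum_le_sum_of_subset (Finset.subset_univ _)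
  have hx0 : (0 : ℝ) < ((t / q : ℕ) : ℝ) + 1 := by positivity
  have htq : (t : ℝ) ≤ (q : ℝ) * (((t / q : ℕ) : ℝ) + 1) := by
    have h1 : t < (t / q + 1) * q := (Nat.div_lt_iff_lt_mul hq).mp (Nat.lt_succ_self _)
    have := (Nat.cast_lt (α := ℝ)).mpr h1
    push_cast at this
    nlinarith
  have hBadcard : (Bad.card : ℝ) ≤ δ * m' := by
    have h1 : ((Bad.card : ℝ)) * (((t / q : ℕ) : ℝ) + 1) ≤ δ * t * m' / q := by
      have := hsum
      have h2 : ((Bad.card * (t / q + 1) : ℕ) : ℝ) ≤ ((∑ j, cnt j : ℕ) : ℝ) :=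
        Nat.cast_le.mpr hsum
      calc ((Bad.card : ℝ)) * (((t / q : ℕ) : ℝ) + 1) ≤ ((∑ j, cnt j : ℕ) : ℝ) := by
            exact_mod_cast hsum
        _ = ({p : Fin m' × Fin n | A p.1 p.2 ≠ N p.1 p.2}.ncard : ℝ) := by
            rw [hncard_eq]
        _ ≤ δ * t * m' / q := hN
    have h3 : δ * t * m' / q ≤ δ * m' * (((t / q : ℕ) : ℝ) + 1) := by
      rw [div_le_iff₀ (by exact_mod_cast hq : (0:ℝ) < (q:ℝ))]
      have hm'0 : (0 : ℝ) ≤ (m' : ℝ) := Nat.cast_nonneg _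
      nlinarith [mul_le_mul_of_nonneg_right
        (mul_le_mul_of_nonneg_left htq hδ0.le) hm'0]
    nlinarith
  -- the set of good rows
  have hBadle : Bad.card ≤ m' := le_trans (Finset.card_le_univ _) (by simp)
  have hRcard : (1 - δ) * (m' : ℝ) ≤ ((Badᶜ.card : ℕ) : ℝ) := by
    have : Badᶜ.card = m' - Bad.card := by
      rw [Finset.card_compl]; simp
    rw [this, Nat.cast_sub hBadle]
    linarith
  choose S hSR hSq hSpan using hE Badᶜ hRcard
  choose c hcsupp hcsum using fun i => Submodule.mem_span_set.mp (hSpan i)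
  have hpre : ∀ i (v : Fin m → F), v ∈ (c i).support → ∃ j ∈ S i, E j = v := by
    intro i v hv
    rcases hcsupp i hv with ⟨j, hj, hje⟩
    exact ⟨j, hj, hje⟩
  choose pre hpreS hpreE using hpre
  -- the reconstruction matrix
  set C : Matrix (Fin m) (Fin m') F := fun i j =>
    ∑ v ∈ (c i).support.attach, if pre i v.1 v.2 = j then c i v.1 else 0 with hC
  -- entries of C * N
  have hCN : ∀ i k, (C * N) i k =
      ∑ v ∈ (c i).support.attach, c i v.1 * N (pre i v.1 v.2) k := by
    intro i k
    rw [Matrix.mul_apply]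
    simp only [hC, Finset.sum_mul]
    rw [Finset.sum_comm]
    refine Finset.sum_congr rfl fun v _ => ?_
    simp only [ite_mul, zero_mul]
    rw [Finset.sum_ite_eq Finset.univ (pre i v.1 v.2) (fun j => c i v.1 * N j k)]
    simp
  -- entries of M * T via the combination
  have hsingle : ∀ (i : Fin m) (x : Fin m), (∑ v ∈ (c i).support.attach, c i v.1 * v.1 x)
      = (Pi.single i 1 : Fin m → F) x := by
    intro i x
    have h2 : (∑ v ∈ (c i).support, c i v • v) = (Pi.single i 1 : Fin m → F) :=
      hcsum i
    have h := congrFun h2 x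
    rw [Finset.sum_apply] at h
    rw [← h, ← Finset.sum_attach ((c i).support) (fun v => (c i v • v) x)]
    refine Finset.sum_congr rfl fun v _ => ?_
    simp
  have hMT : ∀ i k, (M * T) i k =
      ∑ v ∈ (c i).support.attach, c i v.1 * A (pre i v.1 v.2) k := by
    intro i k
    have hArow : ∀ j, A j k = ∑ x, E j x * (M * T) x k := by
      intro j
      rw [hA, Matrix.mul_assoc, Matrix.mul_apply]
    calc (M * T) i k = ∑ x, (Pi.single i 1 : Fin m → F) x * (M * T) x k := by
          rw [Finset.sum_eq_single i]
          · simp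
          · intro b _ hb; simp [Pi.single_apply, hb]
          · simp
      _ = ∑ x, (∑ v ∈ (c i).support.attach, c i v.1 * v.1 x) * (M * T) x k := by
          refine Finset.sum_congr rfl fun x _ => ?_
          rw [hsingle]
      _ = ∑ v ∈ (c i).support.attach, c i v.1 * A (pre i v.1 v.2) k := by
          simp only [Finset.sum_mul]
          rw [Finset.sum_comm]
          refine Finset.sum_congr rfl fun v _ => ?_
          rw [hArow (pre i v.1 v.2), hpreE i v.1 v.2, Finset.mul_sum]
          exact Finset.sum_congr rfl fun x _ => mul_assoc _ _ _
  -- rows of C * N are close to rows of M * T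
  have hrow : ∀ i, {j | (M * T) i j ≠ (C * N) i j}.ncard ≤ t + 1 := by
    intro i
    have hsub : (Finset.univ.filter fun k => (M * T) i k ≠ (C * N) i k) ⊆
        (c i).support.attach.biUnion (fun v =>
          Finset.univ.filter fun k => A (pre i v.1 v.2) k ≠ N (pre i v.1 v.2) k) := by
      intro k hk
      rw [Finset.mem_filter] at hk
      by_contra hcon
      simp only [Finset.mem_biUnion, Finset.mem_filter, Finset.mem_univ, true_and,
        not_exists, not_and, not_not] at hcon
      apply hk.2
      rw [hMT i k, hCN i k]
      refine Finset.sum_congr rfl fun v hv => ?_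
      rw [hcon v (Finset.mem_attach _ v)]
    have hcard1 : ∀ v : {x // x ∈ (c i).support},
        (Finset.univ.filter fun k => A (pre i v.1 v.2) k ≠ N (pre i v.1 v.2) k).card ≤ t / q := by
      intro v
      have hmem : pre i v.1 v.2 ∈ Badᶜ := hSR i (hpreS i v.1 v.2)
      rw [Finset.mem_compl, hBadDef, Finset.mem_filter] at hmem
      push_neg at hmem
      exact hmem (Finset.mem_univ _)
    have hsupp : (c i).support.card ≤ q := by
      have h1 : ((c i).support : Set (Fin m → F)).ncard ≤
          ((fun j => E j) '' (↑(S i) : Set (Fin m'))).ncard :=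
        Set.ncard_le_ncard (hcsupp i) ((S i).finite_toSet.image _)
      have h2 : ((fun j => E j) '' (↑(S i) : Set (Fin m'))).ncard ≤
          (↑(S i) : Set (Fin m')).ncard := Set.ncard_image_le (S i).finite_toSet
      rw [Set.ncard_coe_finset] at h1 h2
      exact le_trans (le_trans h1 h2) (hSq i)
    have hncard : {j | (M * T) i j ≠ (C * N) i j}.ncard =
        (Finset.univ.filter fun k => (M * T) i k ≠ (C * N) i k).card := by
      rw [Set.ncard_eq_toFinset_card']
      simp [Set.toFinset_setOf]
    rw [hncard]
    calc (Finset.univ.filter fun k => (M * T) i k ≠ (C * N) i k).card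
        ≤ ((c i).support.attach.biUnion (fun v =>
          Finset.univ.filter fun k => A (pre i v.1 v.2) k ≠ N (pre i v.1 v.2) k)).card :=
          Finset.card_le_card hsub
      _ ≤ ∑ v ∈ (c i).support.attach, (Finset.univ.filter fun k =>
            A (pre i v.1 v.2) k ≠ N (pre i v.1 v.2) k).card := Finset.card_biUnion_le
      _ ≤ ∑ _v ∈ (c i).support.attach, t / q := Finset.sum_le_sum fun v _ => hcard1 v
      _ = (c i).support.card * (t / q) := by rw [Finset.sum_const, smul_eq_mul, Finset.card_attach]
      _ ≤ q * (t / q) := Nat.mul_le_mul_right _ hsupp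
      _ = (t / q) * q := mul_comm _ _
      _ ≤ t := Nat.div_mul_le_self t q
      _ ≤ t + 1 := Nat.le_succ t
  have hrank := hM T hT (C * N) hrow
  exact le_trans hrank (Matrix.rank_mul_le_right C N)

/-- strong row rigidity to strong global rigidity via LDC: if
`E ∈ F^{m'×m}` has the property that for every set `R` of at least `(1-δ)·m'` rows and
every `i`, the `i`-th standard basis vector of `F^m` is in the span of at most `q` rows
of `E` with indices in `R`, and `M` is `(m,n,r,t+1)`-strongly row rigid, then `E·M` is
`(m',n,r,δ·t·m'/q)`-strongly globally rigid. -/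
theorem stronglyRowRigid_to_stronglyGloballyRigid {F : Type*} [Field F] {m m' n : ℕ}
    (δ : ℝ) (hδ0 : 0 < δ) (hδ1 : δ < 1)
    (q t r : ℕ) (hq : 0 < q) (ht : 0 < t) (hr : 0 < r)
    (E : Matrix (Fin m') (Fin m) F)
    (hE : ∀ R : Finset (Fin m'), (1 - δ) * (m' : ℝ) ≤ (R.card : ℝ) →
      ∀ i : Fin m, ∃ S : Finset (Fin m'), S ⊆ R ∧ S.card ≤ q ∧
        (Pi.single i 1 : Fin m → F) ∈
          Submodule.span F ((fun j => E j) '' (↑S : Set (Fin m'))))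
    (M : Matrix (Fin m) (Fin n) F) (hM : StronglyRowRigid r (t + 1) M) :
    StronglyGloballyRigidR r (δ * t * m' / q) (E * M) := by
  intro T hT N hN
  exact stronglyRowRigid_to_stronglyGloballyRigid' δ hδ0 hδ1 q t r hq ht hr E hE M
    (fun T hT => hM T hT) T hT N hN
end

section
/- Let F be a field, let N ∈ F^{m'×n} be an (m', n, r, d)-globally rigid matrix, and let k be a positive integer with m' = k·n. Let A ∈ F^{m'×m'} be the square matrix obtained by placing k copies of N side by side (so the columns of A consist of k copies of the columns of N). Then A is (m', m', r, k·d)-globally rigid. -/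
/-! Split the columns of `A` into `k` blocks of `n` columns, each a copy of `N`. If `B` differs
from `A` in at most `k·d` entries, then by pigeonhole `B` differs from `A` in at most `d` entries
on some block; that block of `B` then has rank at least `r` by the rigidity of `N`, and a column
submatrix has rank at most that of the whole matrix. -/

def GloballyRigid {F : Type*} [Field F] {m n : ℕ} (r t : ℕ)
    (M : Matrix (Fin m) (Fin n) F) : Prop :=
  ∀ N : Matrix (Fin m) (Fin n) F,
    ({p : Fin m × Fin n | M p.1 p.2 ≠ N p.1 p.2}.ncard ≤ t) → r ≤ N.rank

theorem Matrix.ncard_ne_eq_sum_ncard_ne_submatrix {α m n ι κ : Type*} [Fintype m] [Fintype ι]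
    [Fintype κ] (e : ι × κ ≃ n) (M N : Matrix m n α) :
    {p : m × n | M p.1 p.2 ≠ N p.1 p.2}.ncard =
      ∑ a : ι, {p : m × κ | M.submatrix id (e ∘ Prod.mk a) p.1 p.2 ≠
        N.submatrix id (e ∘ Prod.mk a) p.1 p.2}.ncard := by
  let blocks : m × n ≃ ι × m × κ := ((Equiv.refl m).prodCongr e.symm).trans <|
    (Equiv.prodAssoc m ι κ).symm.trans <|
      ((Equiv.prodComm m ι).prodCongr (Equiv.refl κ)).trans (Equiv.prodAssoc ι m κ)
  simp_rw [← Nat.card_coe_set_eq, Set.coe_ofPred]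
  rw [← Nat.card_sigma, ← Nat.card_congr (Equiv.subtypeProdEquivSigmaSubtype _)]
  exact Nat.card_congr (blocks.subtypeEquiv fun p => by simp [blocks])

theorem GloballyRigid.of_column_blocks {F : Type*} [Field F] {m n k p r d : ℕ} (hk : 0 < k)
    (e : Fin k × Fin n ≃ Fin p) (A : Matrix (Fin m) (Fin p) F)
    (hblock : ∀ a, GloballyRigid r d (A.submatrix id (e ∘ Prod.mk a))) :
    GloballyRigid r (k * d) A := by
  intro B hB
  have : Nonempty (Fin k) := Fin.pos_iff_nonempty.mp hk
  rw [Matrix.ncard_ne_eq_sum_ncard_ne_submatrix e] at hB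
  have hblocks : _ ≤ ∑ _a : Fin k, d := hB.trans_eq (by simp)
  obtain ⟨a, -, ha⟩ := Finset.exists_le_of_sum_le Finset.univ_nonempty hblocks
  exact (hblock a _ ha).trans (B.rank_submatrix_le _ _)

/-- if `N ∈ F^{m'×n}` is `(m',n,r,d)`-globally rigid with `m' = k·n`, and
`A ∈ F^{m'×m'}` is obtained by placing `k` copies of `N` side by side (column `(a,b)` of
`A` is column `b` of `N`), then `A` is `(m',m',r,k·d)`-globally rigid. -/
theorem copies_of_globallyRigid {F : Type*} [Field F] {n k : ℕ} (r d : ℕ) (hk : 0 < k)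
    (N : Matrix (Fin (k * n)) (Fin n) F) (hN : GloballyRigid r d N)
    (A : Matrix (Fin (k * n)) (Fin (k * n)) F)
    (hA : ∀ (i : Fin (k * n)) (p : Fin k × Fin n), A i (finProdFinEquiv p) = N i p.2) :
    GloballyRigid r (k * d) A := by
  refine GloballyRigid.of_column_blocks hk finProdFinEquiv A fun a => ?_
  have hcopy : A.submatrix id (finProdFinEquiv ∘ Prod.mk a) = N :=
    Matrix.ext fun i b => hA i (a, b)
  rwa [hcopy]
end

section
/- Let F be a finite field with |F| = q, and let m, n, s, t be positive integers with t ≤ s. If q^{s·n + m·t} · s^{m·t} < q^{n·m}, then there exists a matrix M ∈ F^{m×n} that admits no (s, t) linear data structure. -/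
open Finset

theorem exists_eq_sum_single_of_ncard_support_le {ι M : Type*} [Fintype ι] [DecidableEq ι]
    [AddCommMonoid M] {t : ℕ} (ht : t ≤ Fintype.card ι) (r : ι → M)
    (hr : (Function.support r).ncard ≤ t) :
    ∃ (σ : Fin t → ι) (v : Fin t → M), r = ∑ k, Pi.single (σ k) (v k) := by
  classical
  obtain ⟨T, hsuppT, hT⟩ := exists_superset_card_eq
    (s := (Function.support r).toFinset) (by rwa [← Set.ncard_eq_toFinset_card']) ht
  let e : Fin t ≃ T := (T.equivFinOfCardEq hT).symm
  refine ⟨fun k => e k, fun k => r (e k), ?_⟩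
  calc r = ∑ j, Pi.single j (r j) := (univ_sum_single r).symm
    _ = ∑ j ∈ T, Pi.single j (r j) := by
      refine (sum_subset (subset_univ T) fun j _ hj => ?_).symm
      have : r j = 0 := by by_contra h; exact hj (hsuppT (by simpa using h))
      simp [this]
    _ = ∑ k, Pi.single (e k : ι) (r (e k)) := by
      rw [← sum_coe_sort T, ← e.sum_comp]

def sparseMatrixOf {F : Type*} [Field F] {m s t : ℕ} (σv : Fin m → Fin t → Fin s × F) :
    Matrix (Fin m) (Fin s) F :=
  Matrix.of fun i => ∑ k, Pi.single (σv i k).1 (σv i k).2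

theorem RowSparse.exists_sparseMatrixOf_eq {F : Type*} [Field F] {m s t : ℕ}
    {Q : Matrix (Fin m) (Fin s) F} (hQ : RowSparse t Q) (hts : t ≤ s) :
    ∃ σv : Fin m → Fin t → Fin s × F, sparseMatrixOf σv = Q := by
  choose σ v hσv using fun i =>
    exists_eq_sum_single_of_ncard_support_le (by simpa using hts) (Q i) (hQ i)
  exact ⟨fun i k => (σ i k, v i k), funext fun i => (hσv i).symm⟩

theorem ncard_setOf_hasLDS_le {F : Type*} [Field F] [Fintype F] (m n : ℕ) {s t : ℕ}
    (hts : t ≤ s) :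
    {M : Matrix (Fin m) (Fin n) F | HasLDS s t M}.ncard ≤
      Fintype.card F ^ (s * n + m * t) * s ^ (m * t) := by
  let f : (Fin m → Fin t → Fin s × F) × Matrix (Fin s) (Fin n) F → Matrix (Fin m) (Fin n) F :=
    fun x => sparseMatrixOf x.1 * x.2
  have hsub : {M : Matrix (Fin m) (Fin n) F | HasLDS s t M} ⊆ Set.range f := by
    rintro M ⟨Q, P, hQ, rfl⟩
    obtain ⟨σv, rfl⟩ := hQ.exists_sparseMatrixOf_eq hts
    exact ⟨(σv, P), rfl⟩
  calc _ ≤ (Set.range f).ncard := Set.ncard_le_ncard hsub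
    _ ≤ Nat.card ((Fin m → Fin t → Fin s × F) × Matrix (Fin s) (Fin n) F) :=
      Finite.card_range_le f
    _ = _ := by
      simp only [Matrix, Nat.card_eq_fintype_card, Fintype.card_prod, Fintype.card_fun,
        Fintype.card_fin]
      ring

theorem exists_matrix_without_lds_general {F : Type*} [Field F] [Fintype F]
    (m n s t : ℕ) (hts : t ≤ s)
    (h : Fintype.card F ^ (s * n + m * t) * s ^ (m * t) < Fintype.card F ^ (n * m)) :
    ∃ M : Matrix (Fin m) (Fin n) F, ¬ HasLDS s t M := by
  by_contra! hall
  have hcard := ncard_setOf_hasLDS_le (F := F) m n hts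
  have huniv : {M : Matrix (Fin m) (Fin n) F | HasLDS s t M} = Set.univ :=
    Set.eq_univ_of_forall hall
  rw [huniv, Set.ncard_univ] at hcard
  unfold Matrix at hcard
  rw [Nat.card_fun, Nat.card_fun, Nat.card_fin, Nat.card_fin, Nat.card_eq_fintype_card,
    ← pow_mul] at hcard
  exact hcard.not_gt h

/-- counting lower bound: over a finite field of size `q`, if
`q^{s·n + m·t} · s^{m·t} < q^{n·m}`, then some `M ∈ F^{m×n}` admits no `(s,t)` linear
data structure. -/
theorem exists_matrix_without_lds {F : Type*} [Field F] [Fintype F]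
    (m n s t : ℕ) (hm : 0 < m) (hn : 0 < n) (ht : 0 < t) (hts : t ≤ s)
    (h : Fintype.card F ^ (s * n + m * t) * s ^ (m * t) < Fintype.card F ^ (n * m)) :
    ∃ M : Matrix (Fin m) (Fin n) F, ¬ HasLDS s t M :=
  exists_matrix_without_lds_general m n s t hts h
end

section
/- Let F be a field, V ∈ F^{m×n} a matrix, P : F^n → F^s an arbitrary function, and Q ∈ F^{m×s} a t-row-sparse matrix such that Q·P(x) = V·x for every x ∈ F^n. Then there exists a matrix P' ∈ F^{s×n} such that Q·P' = V; in particular, V admits an (s, t) linear data structure in which both the preprocessing map and the query map are linear. -/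
namespace Matrix

theorem exists_mul_eq_of_forall_exists_mulVec_eq_col {α : Type*} [Semiring α]
    {l m n : Type*} [Fintype m] [Fintype n] [DecidableEq n]
    (Q : Matrix l m α) (V : Matrix l n α) (h : ∀ k, ∃ p, Q *ᵥ p = V.col k) :
    ∃ P' : Matrix m n α, Q * P' = V := by
  choose p hp using h
  refine ⟨(of p)ᵀ, ext_of_mulVec_single fun k => ?_⟩
  rw [← mulVec_mulVec, mulVec_single_one, mulVec_single_one]
  exact hp k

end Matrix

theorem linearize_preprocessing_general {F : Type*} [Field F] {m n s : ℕ}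
    (V : Matrix (Fin m) (Fin n) F)
    (P : (Fin n → F) → (Fin s → F))
    (Q : Matrix (Fin m) (Fin s) F)
    (h : ∀ x : Fin n → F, Q.mulVec (P x) = V.mulVec x) :
    ∃ P' : Matrix (Fin s) (Fin n) F, Q * P' = V :=
  Q.exists_mul_eq_of_forall_exists_mulVec_eq_col V fun k =>
    ⟨P (Pi.single k 1), by rw [h, Matrix.mulVec_single_one]⟩

/-- linearization of the preprocessing function: if `V ∈ F^{m×n}`,
`P : F^n → F^s` is an arbitrary function, and `Q ∈ F^{m×s}` is `t`-row-sparse with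
`Q · P(x) = V · x` for every `x`, then there is a matrix `P' ∈ F^{s×n}` with
`Q · P' = V`; in particular `V` admits an `(s,t)` linear data structure with both
the preprocessing and query maps linear. -/
theorem linearize_preprocessing {F : Type*} [Field F] {m n s t : ℕ}
    (V : Matrix (Fin m) (Fin n) F)
    (P : (Fin n → F) → (Fin s → F))
    (Q : Matrix (Fin m) (Fin s) F) (hQ : RowSparse t Q)
    (h : ∀ x : Fin n → F, Q.mulVec (P x) = V.mulVec x) :
    ∃ P' : Matrix (Fin s) (Fin n) F, Q * P' = V :=
  linearize_preprocessing_general V P Q h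
end
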